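/- arXiv:0906.3499 — 2 statements merged into one kernel-verified Lean document; each statement's English description precedes it below -/
import Mathlib

section
/- Let r ≥ 1 and define K = {X ∈ ℝ^{m×n} : ‖X‖_F + ‖X‖_*/√r ≤ 1} and S = conv(⋃_{s ≤ r} {X : rank(X) = s, ‖X‖_F ≤ 1}). Then K ⊆ S; i.e., every matrix X with ‖X‖_F + ‖X‖_*/√r ≤ 1 is a convex combination of matrices of rank at most r and Frobenius norm at most 1. -/
open scoped BigOperators
open Matrix

noncomputable section

/-- Frobenius (trace) inner product of real matrices. -/
def frobInner {m n : ℕ} (X Y : Matrix (Fin m) (Fin n) ℝ) : ℝ :=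
  ∑ i, ∑ j, X i j * Y i j

/-- Frobenius norm of a real matrix. -/
def frobNorm {m n : ℕ} (X : Matrix (Fin m) (Fin n) ℝ) : ℝ :=
  Real.sqrt (frobInner X X)

/-- Euclidean norm of a vector in ℝ^p. -/
def vecNorm {p : ℕ} (b : Fin p → ℝ) : ℝ :=
  Real.sqrt (∑ i, b i ^ 2)

/-- Nuclear norm: the sum of the singular values of X (square roots of the
eigenvalues of X Xᵀ). -/
def nuclearNorm {m n : ℕ} (X : Matrix (Fin m) (Fin n) ℝ) : ℝ :=
  ∑ i, Real.sqrt ((Matrix.isHermitian_mul_conjTranspose_self X).eigenvalues i)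

/-!
Let `E_i` be the spectral projections of `X Xᵀ`, ordered so that the eigenvalues `σ_i²` decrease.
The pieces `E_i X` have rank at most one, are pairwise orthogonal for the trace inner product,
have Frobenius norm `σ_i` and sum to `X`. Group them into consecutive blocks `Y_k` of `r` pieces.
Each `Y_k` has rank at most `r`, so `Y_k` lies in `‖Y_k‖_F • S`, and since `S` contains `0`
it suffices that `∑ₖ ‖Y_k‖_F ≤ 1`. Now `‖Y_0‖_F ≤ ‖X‖_F`, and every `σ` of block `k + 1` is at
most every `σ` of block `k`, whence `‖Y_{k+1}‖_F ≤ √r σ_{(k+1)r} ≤ (∑_{block k} σ) / √r`;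
summing, `∑ₖ ‖Y_k‖_F ≤ ‖X‖_F + ‖X‖_* / √r ≤ 1`.
-/

open Finset
open scoped Pointwise

theorem Matrix.rank_add_le {K m n : Type*} [Field K] [Fintype m] [Fintype n]
    (A B : Matrix m n K) : (A + B).rank ≤ A.rank + B.rank := by
  have h := LinearMap.range_add_le A.mulVecLin B.mulVecLin
  rw [← mulVecLin_add] at h
  calc (A + B).rank
      ≤ Module.finrank K ↥(LinearMap.range A.mulVecLin ⊔ LinearMap.range B.mulVecLin) :=
        Submodule.finrank_mono h
    _ ≤ A.rank + B.rank := Submodule.finrank_add_le_finrank_add_finrank _ _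

theorem Matrix.rank_sum_le {K m n ι : Type*} [Field K] [Fintype m] [Fintype n]
    (s : Finset ι) (A : ι → Matrix m n K) : (∑ i ∈ s, A i).rank ≤ ∑ i ∈ s, (A i).rank :=
  Finset.le_sum_of_subadditive (fun B : Matrix m n K => B.rank) rank_zero.le rank_add_le s A

theorem sum_mem_convexHull_of_mem_smul {R E ι : Type*} [Field R] [LinearOrder R]
    [IsStrictOrderedRing R] [AddCommGroup E] [Module R E] {s : Set E} (hs : 0 ∈ s)
    {I : Finset ι} {c : ι → R} {y : ι → E} (hc : ∀ i ∈ I, 0 ≤ c i) (hc1 : ∑ i ∈ I, c i ≤ 1)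
    (hy : ∀ i ∈ I, y i ∈ c i • s) : ∑ i ∈ I, y i ∈ convexHull R s := by
  choose! z hz hyz using hy
  let w : Option ι → R := fun o => o.elim (1 - ∑ i ∈ I, c i) c
  let x : Option ι → E := fun o => o.elim 0 z
  have hmem : ∑ o ∈ I.insertNone, w o • x o ∈ convexHull R s := by
    refine (convex_convexHull R s).sum_mem ?_ (by simp [w]) ?_
    · rintro (_ | i) hi
      · simpa [w] using hc1
      · exact hc i (by simpa using hi)
    · rintro (_ | i) hi
      · exact subset_convexHull R s hs
      · exact subset_convexHull R s (hz i (by simpa using hi))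
  simpa [w, x, ← Finset.sum_congr rfl hyz] using hmem

section Frobenius

variable {m n : ℕ}

theorem frobNorm_eq_sqrt_trace (A : Matrix (Fin m) (Fin n) ℝ) :
    frobNorm A = √(trace (A * Aᴴ)) := by
  simp [frobNorm, frobInner, trace, mul_apply]

theorem frobNorm_nonneg (A : Matrix (Fin m) (Fin n) ℝ) : 0 ≤ frobNorm A :=
  Real.sqrt_nonneg _

theorem frobNorm_smul (c : ℝ) (A : Matrix (Fin m) (Fin n) ℝ) :
    frobNorm (c • A) = |c| * frobNorm A := by
  have : trace (c • A * (c • A)ᴴ) = c ^ 2 * trace (A * Aᴴ) := by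
    simp [trace_smul, sq, mul_assoc]
  rw [frobNorm_eq_sqrt_trace, frobNorm_eq_sqrt_trace, this, Real.sqrt_mul (sq_nonneg c),
    Real.sqrt_sq_eq_abs]

theorem eq_zero_of_frobNorm_eq_zero {A : Matrix (Fin m) (Fin n) ℝ} (h : frobNorm A = 0) :
    A = 0 := by
  rw [frobNorm_eq_sqrt_trace,
    Real.sqrt_eq_zero (posSemidef_self_mul_conjTranspose A).trace_nonneg] at h
  exact trace_mul_conjTranspose_self_eq_zero_iff.mp h

theorem frobNorm_sum_of_orthogonal {ι : Type*} [DecidableEq ι] (I : Finset ι)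
    {P : ι → Matrix (Fin m) (Fin n) ℝ} {σ : ι → ℝ}
    (h : ∀ s t, trace (P s * (P t)ᴴ) = if s = t then σ t ^ 2 else 0) :
    frobNorm (∑ t ∈ I, P t) = √(∑ t ∈ I, σ t ^ 2) := by
  rw [frobNorm_eq_sqrt_trace, conjTranspose_sum, Matrix.sum_mul, trace_sum]
  simp_rw [Matrix.mul_sum, trace_sum, h]
  exact congrArg _ (Finset.sum_congr rfl fun s hs => by simp [hs])

def lowRankBall (m n r : ℕ) : Set (Matrix (Fin m) (Fin n) ℝ) :=
  {X | X.rank ≤ r ∧ frobNorm X ≤ 1}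

theorem zero_mem_lowRankBall (r : ℕ) : (0 : Matrix (Fin m) (Fin n) ℝ) ∈ lowRankBall m n r := by
  simp [lowRankBall, frobNorm_eq_sqrt_trace]

theorem mem_frobNorm_smul_lowRankBall {r : ℕ} {Y : Matrix (Fin m) (Fin n) ℝ} (hY : Y.rank ≤ r) :
    Y ∈ frobNorm Y • lowRankBall m n r := by
  by_cases h : frobNorm Y = 0
  · rw [h, Set.zero_smul_set ⟨0, zero_mem_lowRankBall r⟩, eq_zero_of_frobNorm_eq_zero h]
    rfl
  refine ⟨(frobNorm Y)⁻¹ • Y, ⟨?_, ?_⟩, smul_inv_smul₀ h Y⟩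
  · rwa [rank_smul_of_mem_nonZeroDivisors _ (mem_nonZeroDivisors_of_ne_zero (inv_ne_zero h))]
  · rw [frobNorm_smul, abs_inv, abs_of_nonneg (frobNorm_nonneg Y), inv_mul_cancel₀ h]

end Frobenius

theorem Finset.sum_range_mul_eq_sum_sum_Ico {M : Type*} [AddCommMonoid M] (f : ℕ → M) (r N : ℕ) :
    ∑ t ∈ range (N * r), f t = ∑ k ∈ range N, ∑ t ∈ Ico (k * r) ((k + 1) * r), f t := by
  induction N with
  | zero => simp
  | succ N ih =>
    rw [sum_range_succ, ← ih, sum_range_add_sum_Ico _ (Nat.mul_le_mul_right r N.le_succ)]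

section Blocks

variable {σ : ℕ → ℝ}

theorem sqrt_sum_sq_Ico_le_sum_Ico_div (hσ : Antitone σ) (hσ0 : ∀ t, 0 ≤ σ t) (r k : ℕ) :
    √(∑ t ∈ Ico ((k + 1) * r) ((k + 1 + 1) * r), σ t ^ 2) ≤
      (∑ t ∈ Ico (k * r) ((k + 1) * r), σ t) / √r := by
  set a := σ ((k + 1) * r)
  have hcard : ∀ j, #(Ico (j * r) ((j + 1) * r)) = r := fun j => by
    rw [Nat.card_Ico, add_mul, one_mul, Nat.add_sub_cancel_left]
  have hupper : ∑ t ∈ Ico ((k + 1) * r) ((k + 1 + 1) * r), σ t ^ 2 ≤ r * a ^ 2 := by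
    refine (sum_le_card_nsmul _ _ _ fun t ht => ?_).trans_eq (by rw [hcard, nsmul_eq_mul])
    exact pow_le_pow_left₀ (hσ0 t) (hσ (mem_Ico.mp ht).1) 2
  have hlower : r * a ≤ ∑ t ∈ Ico (k * r) ((k + 1) * r), σ t := by
    refine (card_nsmul_le_sum _ _ _ fun t ht => ?_).trans_eq' (by rw [hcard, nsmul_eq_mul])
    exact hσ (mem_Ico.mp ht).2.le
  calc √(∑ t ∈ Ico ((k + 1) * r) ((k + 1 + 1) * r), σ t ^ 2)
      ≤ √(r * a ^ 2) := Real.sqrt_le_sqrt hupper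
    _ = r * a / √r := by
      rw [Real.sqrt_mul (Nat.cast_nonneg r), Real.sqrt_sq (hσ0 _), mul_div_right_comm,
        Real.div_sqrt]
    _ ≤ _ := div_le_div_of_nonneg_right hlower (Real.sqrt_nonneg _)

theorem sum_sqrt_sum_sq_Ico_le (hσ : Antitone σ) (hσ0 : ∀ t, 0 ≤ σ t) (r N : ℕ) :
    ∑ k ∈ range N, √(∑ t ∈ Ico (k * r) ((k + 1) * r), σ t ^ 2) ≤
      √(∑ t ∈ range (N * r), σ t ^ 2) + (∑ t ∈ range (N * r), σ t) / √r := by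
  cases N with
  | zero => simp
  | succ N =>
    rw [sum_range_succ']
    have hfirst : √(∑ t ∈ Ico (0 * r) ((0 + 1) * r), σ t ^ 2) ≤
        √(∑ t ∈ range ((N + 1) * r), σ t ^ 2) :=
      Real.sqrt_le_sqrt <| sum_le_sum_of_subset_of_nonneg
        (fun t ht => mem_range.2 ((mem_Ico.1 ht).2.trans_le (Nat.mul_le_mul_right r (by omega))))
        fun t _ _ => sq_nonneg (σ t)
    have hrest : ∑ k ∈ range N, √(∑ t ∈ Ico ((k + 1) * r) ((k + 1 + 1) * r), σ t ^ 2) ≤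
        (∑ t ∈ range ((N + 1) * r), σ t) / √r :=
      calc _ ≤ ∑ k ∈ range N, (∑ t ∈ Ico (k * r) ((k + 1) * r), σ t) / √r :=
            sum_le_sum fun k _ => sqrt_sum_sq_Ico_le_sum_Ico_div hσ hσ0 r k
        _ = (∑ t ∈ range (N * r), σ t) / √r := by
            rw [← sum_div, sum_range_mul_eq_sum_sum_Ico]
        _ ≤ _ := by
            gcongr
            · exact fun t _ _ => hσ0 t
            · exact N.le_succ
    linarith

end Blocks

theorem iUnion_rank_eq_lowRankBall {m n r : ℕ} :
    (⋃ s : ℕ, ⋃ (_ : s ≤ r), {X : Matrix (Fin m) (Fin n) ℝ | X.rank = s ∧ frobNorm X ≤ 1}) =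
      lowRankBall m n r := by
  ext X
  simp [lowRankBall]

theorem sum_range_mem_convexHull_lowRankBall {m n r : ℕ} {σ : ℕ → ℝ} (hσ : Antitone σ)
    (hσ0 : ∀ t, 0 ≤ σ t) {P : ℕ → Matrix (Fin m) (Fin n) ℝ} (hrank : ∀ t, (P t).rank ≤ 1)
    (horth : ∀ s t, trace (P s * (P t)ᴴ) = if s = t then σ t ^ 2 else 0) (N : ℕ)
    (h : frobNorm (∑ t ∈ range (N * r), P t) + (∑ t ∈ range (N * r), σ t) / √r ≤ 1) :
    ∑ t ∈ range (N * r), P t ∈ convexHull ℝ (lowRankBall m n r) := by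
  rw [sum_range_mul_eq_sum_sum_Ico]
  refine sum_mem_convexHull_of_mem_smul (zero_mem_lowRankBall r)
    (fun k _ => frobNorm_nonneg _) ?_ fun k _ => mem_frobNorm_smul_lowRankBall ?_
  · calc ∑ k ∈ range N, frobNorm (∑ t ∈ Ico (k * r) ((k + 1) * r), P t)
        = ∑ k ∈ range N, √(∑ t ∈ Ico (k * r) ((k + 1) * r), σ t ^ 2) := by
          simp_rw [frobNorm_sum_of_orthogonal _ horth]
      _ ≤ √(∑ t ∈ range (N * r), σ t ^ 2) + (∑ t ∈ range (N * r), σ t) / √r :=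
          sum_sqrt_sum_sq_Ico_le hσ hσ0 r N
      _ ≤ 1 := by rwa [← frobNorm_sum_of_orthogonal _ horth]
  · calc (∑ t ∈ Ico (k * r) ((k + 1) * r), P t).rank
        ≤ ∑ t ∈ Ico (k * r) ((k + 1) * r), (P t).rank := rank_sum_le _ _
      _ ≤ ∑ t ∈ Ico (k * r) ((k + 1) * r), 1 := sum_le_sum fun t _ => hrank t
      _ = r := by simp [add_mul]

section EigenProjection

variable {ι : Type*} [Fintype ι] [DecidableEq ι]

def Matrix.IsHermitian.eigenProjection {A : Matrix ι ι ℝ} (hA : A.IsHermitian) (i : ι) :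
    Matrix ι ι ℝ :=
  let U : Matrix ι ι ℝ := hA.eigenvectorUnitary
  U * single i i 1 * star U

variable {A : Matrix ι ι ℝ} (hA : A.IsHermitian)

theorem Matrix.IsHermitian.sum_eigenProjection : ∑ i, hA.eigenProjection i = 1 := by
  simp only [eigenProjection]
  rw [← Finset.sum_mul, ← Finset.mul_sum]
  simp [sum_single_one]

theorem Matrix.IsHermitian.conjTranspose_eigenProjection (i : ι) :
    (hA.eigenProjection i)ᴴ = hA.eigenProjection i := by
  simp only [eigenProjection, conjTranspose_mul, star_eq_conjTranspose, conjTranspose_conjTranspose,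
    conjTranspose_single, star_one, Matrix.mul_assoc]

theorem Matrix.IsHermitian.rank_eigenProjection_le (i : ι) : (hA.eigenProjection i).rank ≤ 1 :=
  calc _ ≤ (_ * single i i (1 : ℝ)).rank := rank_mul_le_left _ _
    _ ≤ (single i i (1 : ℝ)).rank := rank_mul_le_right _ _
    _ ≤ 1 := by rw [single_eq_single_vecMulVec_single]; exact rank_vecMulVec_le _ _

theorem Matrix.IsHermitian.trace_eigenProjection_mul_mul_eigenProjection (i j : ι) :
    trace (hA.eigenProjection i * A * hA.eigenProjection j) =
      if i = j then hA.eigenvalues i else 0 := by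
  set U : Matrix ι ι ℝ := ↑hA.eigenvectorUnitary
  have hdiag : star U * A * U = diagonal hA.eigenvalues := by
    simpa using hA.conjStarAlgAut_star_eigenvectorUnitary
  have : hA.eigenProjection i * A * hA.eigenProjection j =
      U * (single i i 1 * (star U * A * U) * single j j 1) * star U := by
    simp only [eigenProjection, U, Matrix.mul_assoc]
  rw [this, trace_mul_cycle, Unitary.coe_star_mul_self, one_mul, hdiag, single_mul_mul_single]
  by_cases h : i = j
  · subst h; simp
  · simp [h]

theorem Matrix.IsHermitian.eigenvalues_equivOfCardEq (j : Fin (Fintype.card ι)) :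
    hA.eigenvalues (Fintype.equivOfCardEq (Fintype.card_fin _) j) = hA.eigenvalues₀ j := by
  simp [eigenvalues]

end EigenProjection

theorem Finset.sum_range_dite_lt {M : Type*} [AddCommMonoid M] {k N : ℕ} (hN : k ≤ N)
    (f : Fin k → M) : ∑ t ∈ range N, (if h : t < k then f ⟨t, h⟩ else 0) = ∑ j, f j := by
  rw [sum_fin_eq_sum_range, ← sum_range_add_sum_Ico _ hN,
    sum_eq_zero fun t ht => dif_neg (mem_Ico.mp ht).1.not_gt, add_zero]

section SortedPieces

variable {ι κ : Type*} [Fintype ι] [DecidableEq ι] [Fintype κ]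

-- `eigenvalues₀` is sorted decreasingly; both sequences below are padded with zeros
-- beyond `card ι`.
def singularValue (X : Matrix ι κ ℝ) (t : ℕ) : ℝ :=
  if h : t < Fintype.card ι then √((isHermitian_mul_conjTranspose_self X).eigenvalues₀ ⟨t, h⟩)
  else 0

def sortedEigenPiece (X : Matrix ι κ ℝ) (t : ℕ) : Matrix ι κ ℝ :=
  if h : t < Fintype.card ι then
    (isHermitian_mul_conjTranspose_self X).eigenProjection
      (Fintype.equivOfCardEq (Fintype.card_fin _) ⟨t, h⟩) * X
  else 0

theorem sum_range_singularValue {m n : ℕ} (X : Matrix (Fin m) (Fin n) ℝ) {N : ℕ}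
    (hN : Fintype.card (Fin m) ≤ N) : ∑ t ∈ range N, singularValue X t = nuclearNorm X := by
  rw [nuclearNorm, ← (Fintype.equivOfCardEq (Fintype.card_fin (Fintype.card (Fin m)))).sum_comp]
  simp_rw [Matrix.IsHermitian.eigenvalues_equivOfCardEq]
  exact sum_range_dite_lt hN fun j => √((isHermitian_mul_conjTranspose_self X).eigenvalues₀ j)

variable (X : Matrix ι κ ℝ)

theorem singularValue_nonneg (t : ℕ) : 0 ≤ singularValue X t := by
  unfold singularValue; split_ifs <;> simp

theorem singularValue_antitone : Antitone (singularValue X) := by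
  intro s t hst
  unfold singularValue
  split_ifs with ht hs hs
  · exact Real.sqrt_le_sqrt ((isHermitian_mul_conjTranspose_self X).eigenvalues₀_antitone hst)
  · omega
  · exact Real.sqrt_nonneg _
  · rfl

theorem sum_range_sortedEigenPiece {N : ℕ} (hN : Fintype.card ι ≤ N) :
    ∑ t ∈ range N, sortedEigenPiece X t = X := by
  set hA := isHermitian_mul_conjTranspose_self X
  calc ∑ t ∈ range N, sortedEigenPiece X t
      = ∑ j, hA.eigenProjection (Fintype.equivOfCardEq (Fintype.card_fin _) j) * X :=
        sum_range_dite_lt hN fun j =>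
          hA.eigenProjection (Fintype.equivOfCardEq (Fintype.card_fin _) j) * X
    _ = X := by
      rw [(Fintype.equivOfCardEq _).sum_comp (fun i => hA.eigenProjection i * X), ← Matrix.sum_mul,
        hA.sum_eigenProjection, Matrix.one_mul]

theorem rank_sortedEigenPiece_le (t : ℕ) : (sortedEigenPiece X t).rank ≤ 1 := by
  unfold sortedEigenPiece
  split_ifs
  · exact (rank_mul_le_left _ _).trans (Matrix.IsHermitian.rank_eigenProjection_le _ _)
  · simp

theorem trace_sortedEigenPiece_mul_conjTranspose (s t : ℕ) :
    trace (sortedEigenPiece X s * (sortedEigenPiece X t)ᴴ) =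
      if s = t then singularValue X t ^ 2 else 0 := by
  set hA := isHermitian_mul_conjTranspose_self X
  unfold sortedEigenPiece singularValue
  by_cases hs : s < Fintype.card ι
  · by_cases ht : t < Fintype.card ι
    · rw [dif_pos hs, dif_pos ht, dif_pos ht, conjTranspose_mul, hA.conjTranspose_eigenProjection,
        Matrix.mul_assoc, ← Matrix.mul_assoc X, ← Matrix.mul_assoc,
        hA.trace_eigenProjection_mul_mul_eigenProjection]
      simp only [hA.eigenvalues_equivOfCardEq, EmbeddingLike.apply_eq_iff_eq, Fin.mk.injEq]
      split_ifs with hst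
      · subst hst
        rw [Real.sq_sqrt (hA.eigenvalues_equivOfCardEq _ ▸
          (posSemidef_self_mul_conjTranspose X).eigenvalues_nonneg _)]
      · rfl
    · simp [ht, show s ≠ t by omega]
  · rcases eq_or_ne s t with rfl | hst <;> simp [*]

end SortedPieces

/-- K = {X : ‖X‖_F + ‖X‖_*/√r ≤ 1} is contained in the convex hull of the union of
the unit balls of rank-s matrices, s ≤ r. -/
theorem K_subset_S {m n : ℕ} (r : ℕ) (hr : 1 ≤ r) :
    {X : Matrix (Fin m) (Fin n) ℝ | frobNorm X + nuclearNorm X / Real.sqrt r ≤ 1} ⊆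
      convexHull ℝ (⋃ s : ℕ, ⋃ (_ : s ≤ r),
        {X : Matrix (Fin m) (Fin n) ℝ | X.rank = s ∧ frobNorm X ≤ 1}) := by
  intro X hX
  have hN : Fintype.card (Fin m) ≤ m * r := by simpa using Nat.le_mul_of_pos_right m hr
  rw [iUnion_rank_eq_lowRankBall, ← sum_range_sortedEigenPiece X hN]
  refine sum_range_mem_convexHull_lowRankBall (singularValue_antitone X) (singularValue_nonneg X)
    (rank_sortedEigenPiece_le X) (trace_sortedEigenPiece_mul_conjTranspose X) m ?_
  rwa [sum_range_sortedEigenPiece X hN, sum_range_singularValue X hN]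
end
end

section
/- For τ, μ > 0 and Y* ∈ ℝ^{m×n}, the matrix S_{τμ}(Y*) is the unique minimizer of the strictly convex function X ↦ τμ‖X‖_* + (1/2)‖X − Y*‖_F² over ℝ^{m×n}. -/
open scoped BigOperators
open Matrix

noncomputable section

/-- Rectangular diagonal matrix with diagonal entries σ. -/
def rectDiag {m n : ℕ} (σ : Fin m → ℝ) : Matrix (Fin m) (Fin n) ℝ :=
  Matrix.of fun i j => if (j : ℕ) = (i : ℕ) then σ i else 0

/-- `(U, σ, V)` is a (full) singular value decomposition of `Y`, with the
singular values σ nonnegative and nonincreasing. -/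
def IsSVD {m n : ℕ} (Y : Matrix (Fin m) (Fin n) ℝ) (U : Matrix (Fin m) (Fin m) ℝ)
    (σ : Fin m → ℝ) (V : Matrix (Fin n) (Fin n) ℝ) : Prop :=
  Uᵀ * U = 1 ∧ Vᵀ * V = 1 ∧ (∀ i, 0 ≤ σ i) ∧ (∀ i j : Fin m, i ≤ j → σ j ≤ σ i) ∧
    Y = U * rectDiag σ * Vᵀ

/-- `Z = S_μ(Y)`: soft shrinkage of the singular values of `Y` by `μ`. -/
def IsSoftShrink {m n : ℕ} (μ : ℝ) (Y Z : Matrix (Fin m) (Fin n) ℝ) : Prop :=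
  ∃ U σ V, IsSVD Y U σ V ∧ Z = U * rectDiag (fun i => max (σ i - μ) 0) * Vᵀ

/-- `Z = R_r(Y)`: hard thresholding keeping the `r` largest singular values of `Y`. -/
def IsHardThresh {m n : ℕ} (r : ℕ) (Y Z : Matrix (Fin m) (Fin n) ℝ) : Prop :=
  ∃ U σ V, IsSVD Y U σ V ∧ Z = U * rectDiag (fun i => if (i : ℕ) < r then σ i else 0) * Vᵀ

/-! Write `Y* = U diag(σ) Vᵀ` and `ν = τμ`. The residual `G = Y* − S_ν(Y*) = U diag(min(σ, ν)) Vᵀ`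
is a dual certificate for the nuclear norm: its operator norm is at most `ν`, so `⟨G, X⟩ ≤ ν‖X‖_*`
for every `X` (diagonalise `X Xᵀ` and apply Cauchy–Schwarz row by row), with equality at
`Z = S_ν(Y*)`, since `G` and `Z` share their singular vectors and `min(σ, ν) (σ − ν)₊ = ν (σ − ν)₊`.
Expanding the square then gives, for the objective `f`,
`f(X) − f(Z) = (ν‖X‖_* − ⟨G, X⟩) + ½‖X − Z‖_F² ≥ ½‖X − Z‖_F²`. -/

section Frobenius

variable {m n : ℕ}

lemma frobInner_eq_trace (A B : Matrix (Fin m) (Fin n) ℝ) : frobInner A B = (A * Bᵀ).trace := by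
  simp [frobInner, Matrix.trace, Matrix.mul_apply]

lemma frobInner_self_nonneg (A : Matrix (Fin m) (Fin n) ℝ) : 0 ≤ frobInner A A :=
  Finset.sum_nonneg fun _ _ => Finset.sum_nonneg fun _ _ => mul_self_nonneg _

lemma frobNorm_sq (A : Matrix (Fin m) (Fin n) ℝ) : frobNorm A ^ 2 = frobInner A A :=
  Real.sq_sqrt (frobInner_self_nonneg A)

lemma eq_zero_of_frobInner_self_eq_zero {A : Matrix (Fin m) (Fin n) ℝ} (h : frobInner A A = 0) :
    A = 0 := by
  have hrows := (Finset.sum_eq_zero_iff_of_nonneg fun i _ =>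
    Finset.sum_nonneg fun j _ => mul_self_nonneg (A i j)).mp h
  ext i j
  exact mul_self_eq_zero.mp <| (Finset.sum_eq_zero_iff_of_nonneg
    fun j _ => mul_self_nonneg (A i j)).mp (hrows i (Finset.mem_univ i)) j (Finset.mem_univ j)

lemma frobNorm_sub_sq (X Y Z : Matrix (Fin m) (Fin n) ℝ) :
    frobNorm (X - Y) ^ 2 = frobNorm (Z - Y) ^ 2 +
      2 * (frobInner (Y - Z) Z - frobInner (Y - Z) X) + frobNorm (X - Z) ^ 2 := by
  simp only [frobNorm_sq, frobInner, Matrix.sub_apply, Finset.mul_sum, ← Finset.sum_sub_distrib,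
    ← Finset.sum_add_distrib]
  exact Finset.sum_congr rfl fun i _ => Finset.sum_congr rfl fun j _ => by ring

lemma frobInner_transpose_mul_transpose_mul {W : Matrix (Fin m) (Fin m) ℝ} (hW : W * Wᵀ = 1)
    (A B : Matrix (Fin m) (Fin n) ℝ) : frobInner (Wᵀ * A) (Wᵀ * B) = frobInner A B := by
  rw [frobInner_eq_trace, frobInner_eq_trace, Matrix.transpose_mul, Matrix.transpose_transpose,
    Matrix.mul_assoc, Matrix.trace_mul_comm, Matrix.mul_assoc, Matrix.mul_assoc, hW,
    Matrix.mul_one]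

lemma frobInner_le_sum_vecNorm_mul (A B : Matrix (Fin m) (Fin n) ℝ) :
    frobInner A B ≤ ∑ i, vecNorm (A i) * vecNorm (B i) :=
  Finset.sum_le_sum fun i _ => Real.sum_mul_le_sqrt_mul_sqrt _ (A i) (B i)

end Frobenius

section VecNorm

variable {p q : ℕ}

lemma vecNorm_nonneg (v : Fin p → ℝ) : 0 ≤ vecNorm v :=
  Real.sqrt_nonneg _

lemma vecNorm_sq (v : Fin p → ℝ) : vecNorm v ^ 2 = v ⬝ᵥ v := by
  rw [vecNorm, Real.sq_sqrt (Finset.sum_nonneg fun i _ => sq_nonneg (v i))]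
  simp [dotProduct, sq]

lemma vecNorm_eq_norm (x : EuclideanSpace ℝ (Fin p)) : vecNorm x = ‖x‖ := by
  simp [EuclideanSpace.norm_eq, vecNorm]

lemma vecNorm_vecMul_sq (v : Fin p → ℝ) (M : Matrix (Fin p) (Fin q) ℝ) :
    vecNorm (v ᵥ* M) ^ 2 = v ⬝ᵥ ((M * Mᵀ) *ᵥ v) := by
  rw [vecNorm_sq, ← Matrix.mulVec_mulVec, Matrix.dotProduct_mulVec, Matrix.mulVec_transpose]

lemma vecNorm_vecMul_of_mul_transpose_eq_one {W : Matrix (Fin p) (Fin q) ℝ} (hW : W * Wᵀ = 1)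
    (v : Fin p → ℝ) : vecNorm (v ᵥ* W) = vecNorm v := by
  rw [← sq_eq_sq₀ (vecNorm_nonneg _) (vecNorm_nonneg _), vecNorm_vecMul_sq, hW,
    Matrix.one_mulVec, vecNorm_sq]

end VecNorm

open Polynomial in
lemma Matrix.IsHermitian.sum_comp_eigenvalues_of_eq_conj_diagonal {ι : Type*} [Fintype ι]
    [DecidableEq ι] {A U : Matrix ι ι ℝ} (hA : A.IsHermitian) (hU : Uᵀ * U = 1) {d : ι → ℝ}
    (hAd : A = U * diagonal d * Uᵀ) (f : ℝ → ℝ) :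
    ∑ i, f (hA.eigenvalues i) = ∑ i, f (d i) := by
  have hcharpoly : A.charpoly = (diagonal d).charpoly := by
    rw [hAd, charpoly_mul_comm, ← Matrix.mul_assoc, hU, Matrix.one_mul]
  have hroots : Finset.univ.val.map hA.eigenvalues = Finset.univ.val.map d := by
    have := congrArg Polynomial.roots hcharpoly
    rw [hA.roots_charpoly_eq_eigenvalues, charpoly_diagonal, roots_prod _ _
      (Finset.prod_ne_zero_iff.mpr fun i _ => X_sub_C_ne_zero (d i))] at this
    simpa using this
  calc ∑ i, f (hA.eigenvalues i) = ((Finset.univ.val.map hA.eigenvalues).map f).sum := by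
        rw [Multiset.map_map]; rfl
    _ = ∑ i, f (d i) := by rw [hroots, Multiset.map_map]; rfl

section RectDiag

variable {m n : ℕ} {U : Matrix (Fin m) (Fin m) ℝ} {V : Matrix (Fin n) (Fin n) ℝ}

lemma rectDiag_sub (d e : Fin m → ℝ) :
    rectDiag (n := n) d - rectDiag (n := n) e = rectDiag (d - e) := by
  ext i j
  by_cases h : (j : ℕ) = i <;> simp [rectDiag, h]

lemma rectDiag_mul_transpose (hmn : m ≤ n) (d e : Fin m → ℝ) :
    rectDiag (n := n) d * (rectDiag (n := n) e)ᵀ = diagonal (d * e) := by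
  ext i i'
  rw [Matrix.mul_apply, Finset.sum_eq_single ⟨i, i.isLt.trans_le hmn⟩]
  · by_cases h : i = i'
    · subst h; simp [rectDiag]
    · simp [rectDiag, h, Fin.val_ne_of_ne h]
  · intro j _ hj
    simp [rectDiag, (Fin.ne_iff_vne _ _).mp hj]
  · simp

lemma conj_rectDiag_mul_transpose (hmn : m ≤ n) (hV : Vᵀ * V = 1) (d e : Fin m → ℝ) :
    (U * rectDiag (n := n) d * Vᵀ) * (U * rectDiag (n := n) e * Vᵀ)ᵀ =
      U * diagonal (d * e) * Uᵀ := by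
  simp only [Matrix.transpose_mul, Matrix.transpose_transpose, Matrix.mul_assoc]
  rw [← Matrix.mul_assoc Vᵀ, hV, Matrix.one_mul, ← Matrix.mul_assoc (rectDiag d),
    rectDiag_mul_transpose hmn]

lemma nuclearNorm_conj_rectDiag (hmn : m ≤ n) (hU : Uᵀ * U = 1) (hV : Vᵀ * V = 1)
    {d : Fin m → ℝ} (hd : 0 ≤ d) : nuclearNorm (U * rectDiag (n := n) d * Vᵀ) = ∑ i, d i := by
  rw [nuclearNorm]
  refine (IsHermitian.sum_comp_eigenvalues_of_eq_conj_diagonal _ hU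
    (conj_rectDiag_mul_transpose hmn hV d d) Real.sqrt).trans ?_
  exact Finset.sum_congr rfl fun i _ => Real.sqrt_mul_self (hd i)

lemma frobInner_conj_rectDiag (hmn : m ≤ n) (hU : Uᵀ * U = 1) (hV : Vᵀ * V = 1)
    (d e : Fin m → ℝ) :
    frobInner (U * rectDiag (n := n) d * Vᵀ) (U * rectDiag (n := n) e * Vᵀ) =
      ∑ i, d i * e i := by
  rw [frobInner_eq_trace, conj_rectDiag_mul_transpose hmn hV, Matrix.trace_mul_cycle, hU,
    Matrix.one_mul, trace_diagonal]
  rfl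

lemma vecNorm_vecMul_conj_rectDiag_le (hmn : m ≤ n) (hU : Uᵀ * U = 1) (hV : Vᵀ * V = 1)
    {e : Fin m → ℝ} {c : ℝ} (hc : 0 ≤ c) (he : ∀ i, |e i| ≤ c) (v : Fin m → ℝ) :
    vecNorm (v ᵥ* (U * rectDiag (n := n) e * Vᵀ)) ≤ c * vecNorm v := by
  have hquad : vecNorm (v ᵥ* (U * rectDiag (n := n) e * Vᵀ)) ^ 2 =
      ∑ i, e i ^ 2 * ((v ᵥ* U) i * (v ᵥ* U) i) := by
    rw [vecNorm_vecMul_sq, conj_rectDiag_mul_transpose hmn hV, ← Matrix.mulVec_mulVec,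
      ← Matrix.mulVec_mulVec, Matrix.dotProduct_mulVec, Matrix.mulVec_transpose]
    simp only [dotProduct, mulVec_diagonal, Pi.mul_apply]
    exact Finset.sum_congr rfl fun i _ => by ring
  have hsq : vecNorm (v ᵥ* (U * rectDiag (n := n) e * Vᵀ)) ^ 2 ≤ (c * vecNorm v) ^ 2 := by
    rw [hquad, mul_pow, ← vecNorm_vecMul_of_mul_transpose_eq_one (mul_eq_one_comm.mp hU),
      vecNorm_sq, dotProduct, Finset.mul_sum]
    refine Finset.sum_le_sum fun i _ => mul_le_mul_of_nonneg_right ?_ (mul_self_nonneg _)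
    exact sq_le_sq' (abs_le.mp (he i)).1 (abs_le.mp (he i)).2
  exact (pow_le_pow_iff_left₀ (vecNorm_nonneg _) (mul_nonneg hc (vecNorm_nonneg v))
    two_ne_zero).mp hsq

end RectDiag

lemma frobInner_le_mul_nuclearNorm {m n : ℕ} (G X : Matrix (Fin m) (Fin n) ℝ) {c : ℝ}
    (hG : ∀ v, vecNorm (v ᵥ* G) ≤ c * vecNorm v) : frobInner G X ≤ c * nuclearNorm X := by
  have hA := isHermitian_mul_conjTranspose_self X
  set W : Matrix (Fin m) (Fin m) ℝ := ↑hA.eigenvectorUnitary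
  have hW : W * Wᵀ = 1 := mem_unitaryGroup_iff.mp hA.eigenvectorUnitary.2
  have hrowG : ∀ k, vecNorm ((Wᵀ * G) k) ≤ c := fun k => by
    have hunit : vecNorm (Wᵀ k) = 1 := by
      rw [IsHermitian.eigenvectorUnitary_transpose_apply, vecNorm_eq_norm]
      exact hA.eigenvectorBasis.orthonormal.1 k
    exact (hG (Wᵀ k)).trans_eq (by rw [hunit, mul_one])
  have hrowX : ∀ k, vecNorm ((Wᵀ * X) k) = √(hA.eigenvalues k) := fun k => by
    rw [← Real.sqrt_sq (vecNorm_nonneg _)]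
    congr 1
    change vecNorm (Wᵀ k ᵥ* X) ^ 2 = _
    rw [hA.eigenvalues_eq, vecNorm_vecMul_sq, IsHermitian.eigenvectorUnitary_transpose_apply]
    simp
  calc frobInner G X = frobInner (Wᵀ * G) (Wᵀ * X) :=
        (frobInner_transpose_mul_transpose_mul hW G X).symm
    _ ≤ ∑ k, vecNorm ((Wᵀ * G) k) * vecNorm ((Wᵀ * X) k) := frobInner_le_sum_vecNorm_mul _ _
    _ ≤ ∑ k, c * √(hA.eigenvalues k) := Finset.sum_le_sum fun k _ => by
        rw [hrowX]; exact mul_le_mul_of_nonneg_right (hrowG k) (Real.sqrt_nonneg _)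
    _ = c * nuclearNorm X := by rw [nuclearNorm, Finset.mul_sum]

theorem unique_minimizer_of_dual_certificate {m n : ℕ} (N : Matrix (Fin m) (Fin n) ℝ → ℝ)
    (Y Z : Matrix (Fin m) (Fin n) ℝ) (hZ : frobInner (Y - Z) Z = N Z)
    (hX : ∀ X, frobInner (Y - Z) X ≤ N X) :
    (∀ X, N Z + 1 / 2 * frobNorm (Z - Y) ^ 2 ≤ N X + 1 / 2 * frobNorm (X - Y) ^ 2) ∧
      ∀ X, N X + 1 / 2 * frobNorm (X - Y) ^ 2 = N Z + 1 / 2 * frobNorm (Z - Y) ^ 2 → X = Z := by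
  have hgap : ∀ X, N X + 1 / 2 * frobNorm (X - Y) ^ 2 - (N Z + 1 / 2 * frobNorm (Z - Y) ^ 2) =
      (N X - frobInner (Y - Z) X) + 1 / 2 * frobInner (X - Z) (X - Z) := fun X => by
    rw [frobNorm_sub_sq X Y Z, frobNorm_sq (X - Z), hZ]
    ring
  refine ⟨fun X => ?_, fun X hXZ => ?_⟩
  · linarith [hgap X, hX X, frobInner_self_nonneg (X - Z)]
  · refine sub_eq_zero.mp (eq_zero_of_frobInner_self_eq_zero ?_)
    linarith [hgap X, hX X, frobInner_self_nonneg (X - Z)]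

/-- S_{τμ}(Y*) is the unique minimizer of X ↦ τμ‖X‖_* + (1/2)‖X − Y*‖_F². -/
theorem softShrink_is_unique_minimizer {m n : ℕ} (hmn : m ≤ n) (τ μ : ℝ)
    (hτ : 0 < τ) (hμ : 0 < μ) (Ystar Z : Matrix (Fin m) (Fin n) ℝ)
    (hZ : IsSoftShrink (τ * μ) Ystar Z) :
    (∀ X : Matrix (Fin m) (Fin n) ℝ,
        τ * μ * nuclearNorm Z + (1 / 2) * frobNorm (Z - Ystar) ^ 2 ≤
          τ * μ * nuclearNorm X + (1 / 2) * frobNorm (X - Ystar) ^ 2) ∧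
      ∀ X : Matrix (Fin m) (Fin n) ℝ,
        τ * μ * nuclearNorm X + (1 / 2) * frobNorm (X - Ystar) ^ 2 =
          τ * μ * nuclearNorm Z + (1 / 2) * frobNorm (Z - Ystar) ^ 2 → X = Z := by
  obtain ⟨U, σ, V, ⟨hU, hV, hσ, -, hY⟩, hZ⟩ := hZ
  set ν := τ * μ
  have hν : 0 ≤ ν := by positivity
  set d : Fin m → ℝ := fun i => max (σ i - ν) 0
  have hd : 0 ≤ d := fun i => le_max_right _ _
  -- `IsSoftShrink` elaborates a product through the `CStarMatrix` instance; restate with `Matrix`'s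
  replace hY : Ystar = U * rectDiag (n := n) σ * Vᵀ := hY
  replace hZ : Z = U * rectDiag (n := n) d * Vᵀ := hZ
  have hcert : ∀ i, |(σ - d) i| ≤ ν ∧ (σ - d) i * d i = ν * d i := fun i => by
    rcases le_total (σ i) ν with h | h
    · simp [d, abs_of_nonneg (hσ i), h]
    · simp [d, max_eq_left (sub_nonneg.mpr h), abs_of_nonneg hν]
  have hG : Ystar - Z = U * rectDiag (n := n) (σ - d) * Vᵀ := by
    rw [hY, hZ, ← Matrix.sub_mul, ← Matrix.mul_sub, rectDiag_sub]
  refine unique_minimizer_of_dual_certificate (fun X => ν * nuclearNorm X) _ _ ?_ fun X => ?_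
  · rw [hG, hZ, frobInner_conj_rectDiag hmn hU hV, nuclearNorm_conj_rectDiag hmn hU hV hd,
      Finset.mul_sum]
    exact Finset.sum_congr rfl fun i _ => (hcert i).2
  · rw [hG]
    exact frobInner_le_mul_nuclearNorm _ X
      (vecNorm_vecMul_conj_rectDiag_le hmn hU hV hν fun i => (hcert i).1)
end
end
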